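/- Let F be a complex Banach space, let K be a bounded linear operator on F, let λ ∈ σ(K) and R > 0 be such that σ(K) ∩ {z ∈ ℂ : |z − λ| ≤ R} = {λ}. Let (K_N) be a sequence of bounded linear operators on F such that K_N f → K f as N → ∞ for every f ∈ F, and such that for every z ∈ ρ(K) there exist N_z ∈ ℕ and M_z < ∞ with z ∈ ρ(K_N) and ‖R(z, K_N)‖ ≤ M_z for all N > N_z. For 0 < ε < R define P^ε = (2πi)⁻¹ ∮_{|z−λ|=ε} R(z, K) dz and, for those N for which the circle {|z − λ| = ε} lies in ρ(K_N), define P_N^ε = (2πi)⁻¹ ∮_{|z−λ|=ε} R(z, K_N) dz. Assume that for every ε ∈ (0, R): P^ε ∘ P^ε = P^ε, the range of P^ε is finite-dimensional of dimension m ≥ 1, and there is N(ε) such that P_N^ε is defined and satisfies P_N^ε ∘ P_N^ε = P_N^ε for all N > N(ε). Then for every ε ∈ (0, R) there exists N₀ ∈ ℕ such that for all N > N₀: σ(K_N) ∩ {z : |z − λ| ≤ R} ⊆ {z : |z − λ| < ε} and σ(K_N) ∩ {z : |z − λ| ≤ ε} ≠ ∅; in particular the Hausdorff distance between σ(K_N)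 ∩ {z : |z − λ| ≤ R} and {λ} tends to 0 as N → ∞. -/

import Mathlib

open Filter Metric

/-- The Riesz spectral projection `(2πi)⁻¹ ∮_{|z-c|=r} R(z, A) dz`. -/
noncomputable def rieszProjection {F : Type*} [NormedAddCommGroup F]
    [NormedSpace ℂ F] (A : F →L[ℂ] F) (c : ℂ) (r : ℝ) : F →L[ℂ] F :=
  (2 * (Real.pi : ℂ) * Complex.I)⁻¹ • (∮ z in C(c, r), resolvent A z)

/-!
The annulus `ε ≤ |z - λ| ≤ R` is a compact subset of `ρ(K)`. A Neumann series spreads the bound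
`‖R(z, K_N)‖ ≤ M_z` to a neighbourhood of `z`, so by compactness `R(z, K_N)` is uniformly bounded
on the annulus for large `N`; in particular the annulus misses `σ(K_N)`. On the circle
`|z - λ| = ε` this bound and the strong convergence `R(z, K_N) f → R(z, K) f` give
`P_N^ε f → P^ε f` by dominated convergence. As `P^ε ≠ 0` (its range has dimension `m ≥ 1`),
`P_N^ε ≠ 0` for large `N`, while Cauchy's theorem gives `P_N^ε = 0` whenever the closed
`ε`-disc lies in `ρ(K_N)`.
-/

open Set Topology

namespace spectrum

section BanachAlgebra

variable {𝕜 A : Type*} [NontriviallyNormedField 𝕜] [NormedRing A] [NormedAlgebra 𝕜 A]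

def ResolventBoundedOn (a : A) (S : Set 𝕜) (M : ℝ) : Prop :=
  ∀ w ∈ S, w ∈ resolventSet 𝕜 a ∧ ‖resolvent a w‖ ≤ M

theorem ResolventBoundedOn.mono {a : A} {S T : Set 𝕜} {M M' : ℝ}
    (h : ResolventBoundedOn a T M) (hST : S ⊆ T) (hM : M ≤ M') : ResolventBoundedOn a S M' :=
  fun w hw => ⟨(h w (hST hw)).1, (h w (hST hw)).2.trans hM⟩

variable [CompleteSpace A]

theorem differentiableOn_resolvent (a : A) : DifferentiableOn 𝕜 (resolvent a) (resolventSet 𝕜 a) :=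
  fun _ hk => (hasDerivAt_resolvent_const_left hk).differentiableAt.differentiableWithinAt

-- `w - a = (z - a) (1 - (z - w) R(z, a))`, and the Neumann series inverts the second factor
-- with norm at most `(1 - 1/2)⁻¹ = 2`.
theorem resolventBoundedOn_of_dist_lt [NormOneClass A] {a : A} {z : 𝕜} {M : ℝ}
    (hz : z ∈ resolventSet 𝕜 a) (hM : ‖resolvent a z‖ ≤ M) :
    ResolventBoundedOn a {w | dist w z * M < 2⁻¹} (2 * M) := by
  intro w hw
  set u := hz.unit
  set x : A := (z - w) • resolvent a z
  have hx : ‖x‖ < 2⁻¹ := by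
    calc ‖x‖ = dist w z * ‖resolvent a z‖ := by rw [norm_smul, ← dist_eq_norm, dist_comm]
      _ ≤ dist w z * M := by gcongr
      _ < 2⁻¹ := hw
  set v := Units.oneSub x (hx.trans (by norm_num))
  have hwa : algebraMap 𝕜 A w - a = ↑(u * v) := by
    have hux : (u : A) * x = algebraMap 𝕜 A (z - w) := by
      rw [mul_smul_comm, resolvent_eq hz, Units.mul_inv, Algebra.algebraMap_eq_smul_one]
    rw [Units.val_mul, Units.val_oneSub, mul_sub, mul_one, hux, hz.unit_spec, map_sub]
    abel
  have hv : ‖(↑v⁻¹ : A)‖ ≤ 2 := by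
    have hgeom := tsum_geometric_le_of_norm_lt_one x (hx.trans (by norm_num))
    rw [norm_one, sub_self, zero_add] at hgeom
    refine hgeom.trans ?_
    rw [inv_le_comm₀ (by linarith) (by norm_num)]
    linarith
  refine ⟨mem_resolventSet_iff.mpr (hwa ▸ (u * v).isUnit), ?_⟩
  rw [resolvent, hwa, Ring.inverse_unit, mul_inv_rev, Units.val_mul]
  calc ‖(↑v⁻¹ : A) * ↑u⁻¹‖ ≤ 2 * ‖resolvent a z‖ := by
        rw [resolvent_eq hz]; exact (norm_mul_le _ _).trans (by gcongr)
    _ ≤ 2 * M := by gcongr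

theorem exists_eventually_resolventBoundedOn_of_isCompact [NormOneClass A] {ι : Type*}
    {L : Filter ι} {a : ι → A} {S : Set 𝕜} (hS : IsCompact S)
    (h : ∀ z ∈ S, ∃ M, ∀ᶠ i in L, z ∈ resolventSet 𝕜 (a i) ∧ ‖resolvent (a i) z‖ ≤ M) :
    ∃ M, ∀ᶠ i in L, ResolventBoundedOn (a i) S M := by
  refine hS.induction_on (p := fun T => ∃ M, ∀ᶠ i in L, ResolventBoundedOn (a i) T M)
    ⟨0, .of_forall fun _ w hw => absurd hw (notMem_empty w)⟩
    (fun T T' hTT' ⟨M, hM⟩ => ⟨M, hM.mono fun i hi => hi.mono hTT' le_rfl⟩)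
    (fun T T' ⟨M, hM⟩ ⟨M', hM'⟩ => ⟨max M M', (hM.and hM').mono fun i hi w hw =>
      hw.elim (hi.1.mono subset_rfl (le_max_left _ _) w)
        (hi.2.mono subset_rfl (le_max_right _ _) w)⟩)
    fun z hz => ?_
  obtain ⟨M, hM⟩ := h z hz
  have hnhds : {w | dist w z * M < 2⁻¹} ∈ 𝓝 z :=
    (isOpen_lt (by fun_prop) continuous_const).mem_nhds (by simp)
  exact ⟨_, mem_nhdsWithin_of_mem_nhds hnhds, 2 * M,
    hM.mono fun i hi => resolventBoundedOn_of_dist_lt hi.1 hi.2⟩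

end BanachAlgebra

section Operator

variable {𝕜 F ι : Type*} [NontriviallyNormedField 𝕜] [NormedAddCommGroup F] [NormedSpace 𝕜 F]
  {L : Filter ι} {K : F →L[𝕜] F} {Kn : ι → F →L[𝕜] F}

theorem tendsto_resolvent_apply (hconv : ∀ f, Tendsto (fun i => Kn i f) L (𝓝 (K f)))
    {z : 𝕜} (hz : z ∈ resolventSet 𝕜 K) {M : ℝ}
    (hM : ∀ᶠ i in L, z ∈ resolventSet 𝕜 (Kn i) ∧ ‖resolvent (Kn i) z‖ ≤ M) (x : F) :
    Tendsto (fun i => resolvent (Kn i) z x) L (𝓝 (resolvent K z x)) := by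
  set y := resolvent K z x
  have hdiff : Tendsto (fun i => M * ‖Kn i y - K y‖) L (𝓝 0) := by
    simpa using (tendsto_iff_norm_sub_tendsto_zero.mp (hconv y)).const_mul M
  refine tendsto_iff_norm_sub_tendsto_zero.mpr (squeeze_zero_norm' ?_ hdiff)
  filter_upwards [hM] with i ⟨hzi, hMi⟩
  have hid : resolvent (Kn i) z x - y = resolvent (Kn i) z (Kn i y - K y) := by
    simpa [y] using congr($(resolvent_sub_resolvent hzi hz) x)
  rw [norm_norm, hid]
  exact (ContinuousLinearMap.le_opNorm _ _).trans (by gcongr)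

end Operator

end spectrum

section CircleIntegral

variable {E G ι : Type*} [NormedAddCommGroup E] [NormedSpace ℂ E] [NormedAddCommGroup G]
  [NormedSpace ℂ G]

theorem circleIntegral_apply {f : ℂ → E →L[ℂ] G} {c : ℂ} {r : ℝ} (hf : CircleIntegrable f c r)
    (x : E) : (∮ z in C(c, r), f z) x = ∮ z in C(c, r), f z x := by
  simp only [circleIntegral, ContinuousLinearMap.intervalIntegral_apply hf.out x, smul_apply]

theorem tendsto_circleIntegral_of_dominated_convergence {L : Filter ι} [L.IsCountablyGenerated]
    {f : ι → ℂ → E} {g : ℂ → E} {c : ℂ} {r C : ℝ} (hr : 0 ≤ r)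
    (hf : ∀ᶠ i in L, CircleIntegrable (f i) c r)
    (hbound : ∀ᶠ i in L, ∀ z ∈ sphere c r, ‖f i z‖ ≤ C)
    (hlim : ∀ z ∈ sphere c r, Tendsto (fun i => f i z) L (𝓝 (g z))) :
    Tendsto (fun i => ∮ z in C(c, r), f i z) L (𝓝 (∮ z in C(c, r), g z)) := by
  refine intervalIntegral.tendsto_integral_filter_of_dominated_convergence (fun _ => r * C)
    (hf.mono fun i hi => hi.out.def'.aestronglyMeasurable) ?_ intervalIntegrable_const
    (.of_forall fun θ _ => (hlim _ (circleMap_mem_sphere c hr θ)).const_smul _)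
  filter_upwards [hbound] with i hi
  refine .of_forall fun θ _ => ?_
  rw [norm_smul, deriv_circleMap, norm_mul, norm_circleMap_zero, Complex.norm_I, mul_one,
    abs_of_nonneg hr]
  exact mul_le_mul_of_nonneg_left (hi _ (circleMap_mem_sphere c hr θ)) hr

end CircleIntegral

section RieszProjection

variable {F ι : Type*} [NormedAddCommGroup F] [NormedSpace ℂ F] [CompleteSpace F]

theorem circleIntegrable_resolvent {A : F →L[ℂ] F} {c : ℂ} {r : ℝ} (hr : 0 ≤ r)
    (h : sphere c r ⊆ resolventSet ℂ A) : CircleIntegrable (resolvent A) c r :=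
  ((spectrum.differentiableOn_resolvent A).continuousOn.mono h).circleIntegrable hr

theorem rieszProjection_apply {A : F →L[ℂ] F} {c : ℂ} {r : ℝ} (hr : 0 ≤ r)
    (h : sphere c r ⊆ resolventSet ℂ A) (x : F) :
    rieszProjection A c r x =
      (2 * (Real.pi : ℂ) * Complex.I)⁻¹ • ∮ z in C(c, r), resolvent A z x := by
  rw [rieszProjection, smul_apply, circleIntegral_apply (circleIntegrable_resolvent hr h)]

theorem rieszProjection_eq_zero {A : F →L[ℂ] F} {c : ℂ} {r : ℝ} (hr : 0 ≤ r)
    (h : closedBall c r ⊆ resolventSet ℂ A) : rieszProjection A c r = 0 := by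
  rw [rieszProjection,
    ((spectrum.differentiableOn_resolvent A).diffContOnCl_ball h).circleIntegral_eq_zero hr,
    smul_zero]

theorem spectrum_inter_closedBall_nonempty {A : F →L[ℂ] F} {c : ℂ} {r : ℝ} (hr : 0 ≤ r)
    (h : rieszProjection A c r ≠ 0) : (spectrum ℂ A ∩ closedBall c r).Nonempty := by
  contrapose! h
  refine rieszProjection_eq_zero hr fun z hz => ?_
  by_contra hzA
  exact h.subset ⟨hzA, hz⟩

theorem tendsto_rieszProjection_apply {L : Filter ι} [L.IsCountablyGenerated]
    {K : F →L[ℂ] F} {Kn : ι → F →L[ℂ] F}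
    (hconv : ∀ f, Tendsto (fun i => Kn i f) L (𝓝 (K f))) {c : ℂ} {r M : ℝ} (hr : 0 ≤ r)
    (hK : sphere c r ⊆ resolventSet ℂ K)
    (hM : ∀ᶠ i in L, spectrum.ResolventBoundedOn (Kn i) (sphere c r) M) (x : F) :
    Tendsto (fun i => rieszProjection (Kn i) c r x) L (𝓝 (rieszProjection K c r x)) := by
  have hint : ∀ᶠ i in L, CircleIntegrable (fun z => resolvent (Kn i) z x) c r :=
    hM.mono fun i hi => (ContinuousLinearMap.apply ℂ F x).continuous.comp_continuousOn
      ((spectrum.differentiableOn_resolvent (Kn i)).continuousOn.mono fun z hz => (hi z hz).1)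
      |>.circleIntegrable hr
  have hbound : ∀ᶠ i in L, ∀ z ∈ sphere c r, ‖resolvent (Kn i) z x‖ ≤ M * ‖x‖ :=
    hM.mono fun i hi z hz =>
      (ContinuousLinearMap.le_opNorm _ _).trans (by gcongr; exact (hi z hz).2)
  have hlim : ∀ z ∈ sphere c r, Tendsto (fun i => resolvent (Kn i) z x) L (𝓝 (resolvent K z x)) :=
    fun z hz => spectrum.tendsto_resolvent_apply hconv (hK hz) (hM.mono fun i hi => hi z hz) x
  rw [rieszProjection_apply hr hK]
  have hcirc := tendsto_circleIntegral_of_dominated_convergence hr hint hbound hlim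
  refine (hcirc.const_smul _).congr' ?_
  filter_upwards [hM] with i hi
  rw [rieszProjection_apply hr fun z hz => (hi z hz).1]

end RieszProjection

section Spectrum

variable {F ι : Type*} [NormedAddCommGroup F] [NormedSpace ℂ F] [CompleteSpace F]

theorem eventually_spectrum_inter_closedBall_subset_ball_and_nonempty {L : Filter ι}
    [L.IsCountablyGenerated] {K : F →L[ℂ] F} {Kn : ι → F →L[ℂ] F}
    (hconv : ∀ f, Tendsto (fun i => Kn i f) L (𝓝 (K f)))
    (hstab : ∀ z ∈ resolventSet ℂ K, ∃ M, ∀ᶠ i in L,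
      z ∈ resolventSet ℂ (Kn i) ∧ ‖resolvent (Kn i) z‖ ≤ M)
    {l : ℂ} {R ε : ℝ} (hε : 0 < ε) (hεR : ε ≤ R)
    (hiso : spectrum ℂ K ∩ closedBall l R ⊆ {l}) (hP : rieszProjection K l ε ≠ 0) :
    ∀ᶠ i in L, spectrum ℂ (Kn i) ∩ closedBall l R ⊆ ball l ε ∧
      (spectrum ℂ (Kn i) ∩ closedBall l ε).Nonempty := by
  obtain ⟨x, hx⟩ : ∃ x, rieszProjection K l ε x ≠ 0 := by
    by_contra! h
    exact hP (ContinuousLinearMap.ext h)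
  have : Nontrivial F := nontrivial_of_ne x 0 (by rintro rfl; simp at hx)
  set S := closedBall l R \ ball l ε
  have hSK : S ⊆ resolventSet ℂ K := by
    rintro z ⟨hzR, hzε⟩
    by_contra hzK
    exact hzε (mem_singleton_iff.1 (hiso ⟨hzK, hzR⟩) ▸ mem_ball_self hε)
  have hsphere : sphere l ε ⊆ S := fun z hz =>
    ⟨closedBall_subset_closedBall hεR (sphere_subset_closedBall hz), by simp [mem_sphere.1 hz]⟩
  obtain ⟨M, hM⟩ := spectrum.exists_eventually_resolventBoundedOn_of_isCompact
    ((isCompact_closedBall l R).diff isOpen_ball) fun z hz => hstab z (hSK hz)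
  have hPx : ∀ᶠ i in L, rieszProjection (Kn i) l ε x ≠ 0 :=
    (tendsto_rieszProjection_apply hconv hε.le (hsphere.trans hSK)
      (hM.mono fun i hi => hi.mono hsphere le_rfl) x).eventually_ne hx
  filter_upwards [hM, hPx] with i hMi hPi
  refine ⟨fun z ⟨hzi, hzR⟩ => ?_,
    spectrum_inter_closedBall_nonempty hε.le fun h => hPi (by simp [h])⟩
  by_contra hzε
  exact hzi (hMi z ⟨hzR, hzε⟩).1

end Spectrum

theorem tendsto_hausdorffDist_singleton_zero {α ι : Type*} [PseudoMetricSpace α] {L : Filter ι}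
    {S : ι → Set α} {x : α} {R : ℝ} (hR : 0 < R)
    (h : ∀ ε, 0 < ε → ε < R → ∀ᶠ i in L, S i ⊆ closedBall x ε ∧ (S i).Nonempty) :
    Tendsto (fun i => hausdorffDist (S i) {x}) L (𝓝 0) := by
  refine Metric.tendsto_nhds.2 fun e he => ?_
  set ε := min e R / 2
  have hε : 0 < ε := by positivity
  have hεe : ε < e := (half_lt_self (lt_min he hR)).trans_le (min_le_left e R)
  have hεR : ε < R := (half_lt_self (lt_min he hR)).trans_le (min_le_right e R)
  filter_upwards [h ε hε hεR] with i ⟨hsub, y, hy⟩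
  have hdist : hausdorffDist (S i) {x} ≤ ε :=
    hausdorffDist_le_of_mem_dist hε.le (fun z hz => ⟨x, rfl, hsub hz⟩)
      fun _ hz => ⟨y, hy, by rw [hz, dist_comm]; exact hsub hy⟩
  rw [Real.dist_0_eq_abs, abs_of_nonneg hausdorffDist_nonneg]
  exact hdist.trans_lt hεe

theorem hausdorff_convergence_isolated_eigenvalue_general {F : Type*}
    [NormedAddCommGroup F] [NormedSpace ℂ F] [CompleteSpace F]
    (K : F →L[ℂ] F) (l : ℂ)
    (R : ℝ) (hR : 0 < R)
    (hiso : spectrum ℂ K ∩ closedBall l R = {l})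
    (Kn : ℕ → F →L[ℂ] F)
    (hconv : ∀ f : F, Tendsto (fun N => Kn N f) atTop (nhds (K f)))
    (hstab : ∀ z ∈ resolventSet ℂ K, ∃ Nz : ℕ, ∃ Mz : ℝ,
      ∀ N > Nz, z ∈ resolventSet ℂ (Kn N) ∧ ‖resolvent (Kn N) z‖ ≤ Mz)
    (m : ℕ) (hm : 1 ≤ m)
    (hP : ∀ ε : ℝ, 0 < ε → ε < R →
      rieszProjection K l ε ∘L rieszProjection K l ε = rieszProjection K l ε ∧
        FiniteDimensional ℂ (LinearMap.range (rieszProjection K l ε : F →ₗ[ℂ] F)) ∧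
        Module.finrank ℂ (LinearMap.range (rieszProjection K l ε : F →ₗ[ℂ] F)) = m) :
    (∀ ε : ℝ, 0 < ε → ε < R → ∃ N₀ : ℕ, ∀ N > N₀,
      spectrum ℂ (Kn N) ∩ closedBall l R ⊆ ball l ε ∧
        (spectrum ℂ (Kn N) ∩ closedBall l ε).Nonempty) ∧
      Tendsto (fun N => hausdorffDist (spectrum ℂ (Kn N) ∩ closedBall l R) {l})
        atTop (nhds 0) := by
  have hstab' : ∀ z ∈ resolventSet ℂ K, ∃ M, ∀ᶠ N in atTop,
      z ∈ resolventSet ℂ (Kn N) ∧ ‖resolvent (Kn N) z‖ ≤ M := fun z hz =>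
    let ⟨Nz, Mz, h⟩ := hstab z hz
    ⟨Mz, eventually_atTop.2 ⟨Nz + 1, h⟩⟩
  have hPne : ∀ ε, 0 < ε → ε < R → rieszProjection K l ε ≠ 0 := fun ε hε hεR h0 => by
    have hrank := (hP ε hε hεR).2.2
    rw [h0, ContinuousLinearMap.toLinearMap_zero, LinearMap.range_zero, finrank_bot] at hrank
    omega
  have hspec : ∀ ε, 0 < ε → ε < R → ∀ᶠ N in atTop,
      spectrum ℂ (Kn N) ∩ closedBall l R ⊆ ball l ε ∧
        (spectrum ℂ (Kn N) ∩ closedBall l ε).Nonempty := fun ε hε hεR =>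
    eventually_spectrum_inter_closedBall_subset_ball_and_nonempty hconv hstab' hε hεR.le
      hiso.subset (hPne ε hε hεR)
  refine ⟨fun ε hε hεR => ?_, tendsto_hausdorffDist_singleton_zero hR fun ε hε hεR => ?_⟩
  · obtain ⟨N₀, h⟩ := eventually_atTop.1 (hspec ε hε hεR)
    exact ⟨N₀, fun N hN => h N hN.le⟩
  · filter_upwards [hspec ε hε hεR] with N ⟨hsub, hne⟩
    exact ⟨hsub.trans ball_subset_closedBall,
      hne.mono (inter_subset_inter_right _ (closedBall_subset_closedBall hεR.le))⟩

/-- Hausdorff convergence of approximate spectra to an isolated eigenvalue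
(Theorem 1 of Section 4): under pointwise convergence `K_N f → K f`, stable
convergence of resolvents, and the projection assumptions on the Riesz
integrals `P^ε` and `P_N^ε` (with `dim P^ε(F) = m ≥ 1`), for every
`ε ∈ (0, R)` and all large `N` the spectrum of `K_N` inside the ball of
radius `R` around `λ` is contained in the ball of radius `ε` and meets the
closed ball of radius `ε`; in particular the Hausdorff distance between
`σ(K_N) ∩ {|z - λ| ≤ R}` and `{λ}` tends to `0`. -/
theorem hausdorff_convergence_isolated_eigenvalue {F : Type*}
    [NormedAddCommGroup F] [NormedSpace ℂ F] [CompleteSpace F]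
    (K : F →L[ℂ] F) (l : ℂ) (hl : l ∈ spectrum ℂ K)
    (R : ℝ) (hR : 0 < R)
    (hiso : spectrum ℂ K ∩ closedBall l R = {l})
    (Kn : ℕ → F →L[ℂ] F)
    (hconv : ∀ f : F, Tendsto (fun N => Kn N f) atTop (nhds (K f)))
    (hstab : ∀ z ∈ resolventSet ℂ K, ∃ Nz : ℕ, ∃ Mz : ℝ,
      ∀ N > Nz, z ∈ resolventSet ℂ (Kn N) ∧ ‖resolvent (Kn N) z‖ ≤ Mz)
    (m : ℕ) (hm : 1 ≤ m)
    (hP : ∀ ε : ℝ, 0 < ε → ε < R →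
      rieszProjection K l ε ∘L rieszProjection K l ε = rieszProjection K l ε ∧
        FiniteDimensional ℂ (LinearMap.range (rieszProjection K l ε : F →ₗ[ℂ] F)) ∧
        Module.finrank ℂ (LinearMap.range (rieszProjection K l ε : F →ₗ[ℂ] F)) = m)
    (hPn : ∀ ε : ℝ, 0 < ε → ε < R → ∃ Nε : ℕ, ∀ N > Nε,
      (∀ z ∈ sphere l ε, z ∈ resolventSet ℂ (Kn N)) ∧
        rieszProjection (Kn N) l ε ∘L rieszProjection (Kn N) l ε =
          rieszProjection (Kn N) l ε) :
    (∀ ε : ℝ, 0 < ε → ε < R → ∃ N₀ : ℕ, ∀ N > N₀,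
      spectrum ℂ (Kn N) ∩ closedBall l R ⊆ ball l ε ∧
        (spectrum ℂ (Kn N) ∩ closedBall l ε).Nonempty) ∧
      Tendsto (fun N => hausdorffDist (spectrum ℂ (Kn N) ∩ closedBall l R) {l})
        atTop (nhds 0) :=
  hausdorff_convergence_isolated_eigenvalue_general K l R hR hiso Kn hconv hstab m hm hP
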